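/- arXiv:0805.2520 — 2 statements merged into one kernel-verified Lean document; each statement's English description precedes it below -/
import Mathlib

section
/- The cotangent Lie algebra T*h1 of the 3-dimensional Heisenberg Lie algebra admits complex structures, admits no abelian complex structure, and every complex structure on T*h1 is nilpotent, in fact 3-step nilpotent. -/
open LieAlgebra

attribute [local instance 100] LieRing.ofAssociativeRing

noncomputable section

section SD

variable {h V : Type*} [LieRing h] [LieAlgebra ℝ h] [AddCommGroup V] [Module ℝ V]

/-- The underlying type of the semidirect product `h ⋉_π V`. -/
def Sd (_π : h →ₗ⁅ℝ⁆ Module.End ℝ V) : Type _ := h × V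

namespace Sd

variable (π : h →ₗ⁅ℝ⁆ Module.End ℝ V)

instance : AddCommGroup (Sd π) := inferInstanceAs (AddCommGroup (h × V))
instance : Module ℝ (Sd π) := inferInstanceAs (Module ℝ (h × V))

variable {π}

/-- An element of the semidirect product. -/
def mk (x : h) (v : V) : Sd π := (x, v)

def pr1 (p : Sd π) : h := Prod.fst p
def pr2 (p : Sd π) : V := Prod.snd p

@[simp] lemma pr1_mk (x : h) (v : V) : pr1 (mk (π := π) x v) = x := rfl
@[simp] lemma pr2_mk (x : h) (v : V) : pr2 (mk (π := π) x v) = v := rfl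
@[simp] lemma mk_add_mk (x y : h) (u v : V) :
    (mk (π := π) x u) + (mk y v) = mk (x + y) (u + v) := rfl
@[simp] lemma smul_mk (t : ℝ) (x : h) (v : V) :
    t • (mk (π := π) x v) = mk (t • x) (t • v) := rfl
@[simp] lemma neg_mk (x : h) (v : V) : -(mk (π := π) x v) = mk (-x) (-v) := rfl
lemma ext_iff {p q : Sd π} : p = q ↔ pr1 p = pr1 q ∧ pr2 p = pr2 q := Prod.ext_iff
@[simp] lemma mk_inj {x y : h} {u v : V} :
    (mk (π := π) x u) = mk y v ↔ x = y ∧ u = v := Prod.ext_iff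
lemma mk_surj (p : Sd π) : ∃ x v, p = mk x v := ⟨pr1 p, pr2 p, rfl⟩

variable (π)

instance : LieRing (Sd π) where
  bracket p q := mk ⁅pr1 p, pr1 q⁆ (π (pr1 p) (pr2 q) - π (pr1 q) (pr2 p))
  add_lie p q r := by
    obtain ⟨x, u, rfl⟩ := mk_surj p; obtain ⟨y, v, rfl⟩ := mk_surj q
    obtain ⟨z, w, rfl⟩ := mk_surj r
    show mk _ _ = mk _ _ + mk _ _
    simp [add_lie, map_add]
    abel
  lie_add p q r := by
    obtain ⟨x, u, rfl⟩ := mk_surj p; obtain ⟨y, v, rfl⟩ := mk_surj q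
    obtain ⟨z, w, rfl⟩ := mk_surj r
    show mk _ _ = mk _ _ + mk _ _
    simp [lie_add, map_add]
    abel
  lie_self p := by
    obtain ⟨x, u, rfl⟩ := mk_surj p
    show mk _ _ = (0 : h × V)
    simp
    rfl
  leibniz_lie p q r := by
    obtain ⟨x, u, rfl⟩ := mk_surj p; obtain ⟨y, v, rfl⟩ := mk_surj q
    obtain ⟨z, w, rfl⟩ := mk_surj r
    show mk _ _ = mk _ _ + mk _ _
    have hxy : π ⁅x, y⁆ = π x * π y - π y * π x := by
      rw [LieHom.map_lie]; rfl
    have hyz : π ⁅y, z⁆ = π y * π z - π z * π y := by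
      rw [LieHom.map_lie]; rfl
    have hxz : π ⁅x, z⁆ = π x * π z - π z * π x := by
      rw [LieHom.map_lie]; rfl
    simp [hxy, hyz, hxz, LinearMap.sub_apply, Module.End.mul_apply, map_sub]
    abel

instance : LieAlgebra ℝ (Sd π) where
  lie_smul t p q := by
    obtain ⟨x, u, rfl⟩ := mk_surj p; obtain ⟨y, v, rfl⟩ := mk_surj q
    show mk _ _ = t • mk _ _
    simp [smul_sub]

@[simp] lemma lie_mk (x y : h) (u v : V) :
    ⁅(Sd.mk (π := π) x u), (Sd.mk (π := π) y v)⁆ = mk ⁅x, y⁆ (π x v - π y u) := rfl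

variable {π}

/-- The copy of `h` inside `h ⋉_π V`. -/
def hPart (π : h →ₗ⁅ℝ⁆ Module.End ℝ V) : Submodule ℝ (Sd π) where
  carrier := {p | pr2 p = 0}
  add_mem' := by
    rintro p q hp hq
    obtain ⟨x, u, rfl⟩ := mk_surj p; obtain ⟨y, v, rfl⟩ := mk_surj q
    simp_all [Set.mem_setOf_eq]
  zero_mem' := rfl
  smul_mem' := by
    rintro t p hp
    obtain ⟨x, u, rfl⟩ := mk_surj p
    simp_all [Set.mem_setOf_eq]

/-- The copy of `V` inside `h ⋉_π V`. -/
def vPart (π : h →ₗ⁅ℝ⁆ Module.End ℝ V) : Submodule ℝ (Sd π) where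
  carrier := {p | pr1 p = 0}
  add_mem' := by
    rintro p q hp hq
    obtain ⟨x, u, rfl⟩ := mk_surj p; obtain ⟨y, v, rfl⟩ := mk_surj q
    simp_all [Set.mem_setOf_eq]
  zero_mem' := rfl
  smul_mem' := by
    rintro t p hp
    obtain ⟨x, u, rfl⟩ := mk_surj p
    simp_all [Set.mem_setOf_eq]

end Sd

end SD

section Cpx

variable {g : Type*} [LieRing g] [LieAlgebra ℝ g]

/-- A complex structure on a real Lie algebra: `J² = -I` and the Nijenhuis tensor of `J`
vanishes. -/
def IsCpxStruct (J : g →ₗ[ℝ] g) : Prop :=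
  (∀ x, J (J x) = -x) ∧
  ∀ x y : g, ⁅J x, J y⁆ - ⁅x, y⁆ - J ⁅J x, y⁆ - J ⁅x, J y⁆ = 0

/-- An abelian complex structure. -/
def IsAbelianCpx (J : g →ₗ[ℝ] g) : Prop := ∀ x y : g, ⁅J x, J y⁆ = ⁅x, y⁆

/-- A bi-invariant complex structure. -/
def IsBiinvariant (J : g →ₗ[ℝ] g) : Prop := ∀ x y : g, J ⁅x, y⁆ = ⁅x, J y⁆

/-- A totally real (almost) complex structure on a semidirect product: `J h = V`. -/
def IsTotallyReal {h V : Type*} [LieRing h] [LieAlgebra ℝ h] [AddCommGroup V] [Module ℝ V]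
    (π : h →ₗ⁅ℝ⁆ Module.End ℝ V) (J : Sd π →ₗ[ℝ] Sd π) : Prop :=
  (Sd.hPart π).map J = Sd.vPart π

end Cpx


section DualRep

variable {h V : Type*} [LieRing h] [LieAlgebra ℝ h] [AddCommGroup V] [Module ℝ V]

/-- The dual representation `π*` of a representation `π`, `(π*(x)a)(u) = -a(π(x)u)`. -/
def dualRep (π : h →ₗ⁅ℝ⁆ Module.End ℝ V) : h →ₗ⁅ℝ⁆ Module.End ℝ (Module.Dual ℝ V) where
  toFun x := -(π x).dualMap
  map_add' x y := by ext φ v; simp [map_add]; abel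
  map_smul' t x := by ext φ v; simp
  map_lie' {x y} := by
    ext φ v
    have : π ⁅x, y⁆ = π x * π y - π y * π x := by rw [LieHom.map_lie]; rfl
    simp [Ring.lie_def, Module.End.mul_apply, this, LinearMap.sub_apply]

@[simp] lemma dualRep_apply (π : h →ₗ⁅ℝ⁆ Module.End ℝ V) (x : h) (φ : Module.Dual ℝ V)
    (v : V) : dualRep π x φ v = -φ (π x v) := rfl

end DualRep

section TanCot

variable (h : Type*) [LieRing h] [LieAlgebra ℝ h]

/-- The coadjoint representation of `h` on `h*`. -/
abbrev coadRep : h →ₗ⁅ℝ⁆ Module.End ℝ (Module.Dual ℝ h) := dualRep (LieAlgebra.ad ℝ h)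

/-- The tangent Lie algebra `T h = h ⋉_ad h`. -/
abbrev TangentAlg := Sd (LieAlgebra.ad ℝ h)

/-- The cotangent Lie algebra `T*h = h ⋉_ad* h*`. -/
abbrev CotangentAlg := Sd (coadRep h)

/-- The canonical neutral metric on the cotangent Lie algebra `T*h`:
`⟨(x,φ),(y,ψ)⟩ = ψ(x) + φ(y)`. -/
def canMetric (p q : CotangentAlg h) : ℝ := Sd.pr2 p (Sd.pr1 q) + Sd.pr2 q (Sd.pr1 p)

end TanCot

section MorePreds

variable {g : Type*} [LieRing g] [LieAlgebra ℝ g]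

/-- A derivation of a Lie algebra. -/
def IsDer (d : g →ₗ[ℝ] g) : Prop := ∀ x y : g, d ⁅x, y⁆ = ⁅d x, y⁆ + ⁅x, d y⁆

/-- The ascending series `a_l(J)` associated to an almost complex structure `J`. -/
def aSer (J : g →ₗ[ℝ] g) : ℕ → Set g
  | 0 => {0}
  | l + 1 => {x | (∀ y : g, ⁅x, y⁆ ∈ aSer J l) ∧ ∀ y : g, ⁅J x, y⁆ ∈ aSer J l}

/-- A nilpotent (almost) complex structure: `a_t(J) = g` for some `t`. -/
def IsNilpotentCpx (J : g →ₗ[ℝ] g) : Prop := ∃ t, aSer J t = Set.univ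

/-- An `r`-step nilpotent (almost) complex structure. -/
def IsNilpotentStepCpx (J : g →ₗ[ℝ] g) (r : ℕ) : Prop :=
  aSer J r = Set.univ ∧ ∀ s < r, aSer J s ≠ Set.univ

/-- A symplectic structure on a Lie algebra, as a bilinear, alternating, nondegenerate,
closed 2-form. -/
def IsSymplForm (ω : g → g → ℝ) : Prop :=
  (∀ x : g, IsLinearMap ℝ (ω x)) ∧ (∀ y : g, IsLinearMap ℝ (fun x => ω x y)) ∧
  (∀ x : g, ω x x = 0) ∧ (∀ x : g, (∀ y : g, ω x y = 0) → x = 0) ∧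
  ∀ x y z : g, ω ⁅x, y⁆ z + ω ⁅y, z⁆ x + ω ⁅z, x⁆ y = 0

/-- A Kähler structure: a compatible pair of a complex structure and a symplectic
structure. -/
def IsKahlerPair (J : g →ₗ[ℝ] g) (ω : g → g → ℝ) : Prop :=
  IsCpxStruct J ∧ IsSymplForm ω ∧ ∀ x y : g, ω (J x) (J y) = ω x y

end MorePreds

section LagSympl

variable {h V : Type*} [LieRing h] [LieAlgebra ℝ h] [AddCommGroup V] [Module ℝ V]

/-- A lagrangian symplectic structure on a semidirect product `h ⋉_π V`: both `h` and `V`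
are totally isotropic. -/
def IsLagrangianSympl (π : h →ₗ⁅ℝ⁆ Module.End ℝ V) (ω : Sd π → Sd π → ℝ) : Prop :=
  IsSymplForm ω ∧ (∀ x y : h, ω (Sd.mk x 0) (Sd.mk y 0) = 0) ∧
    ∀ u v : V, ω (Sd.mk 0 u) (Sd.mk 0 v) = 0

end LagSympl

section Solv3

/-- A `2 × 2` real matrix as an endomorphism of `ℝ²`. -/
def endOf (a b c d : ℝ) : Module.End ℝ (Fin 2 → ℝ) where
  toFun v := ![a * v 0 + b * v 1, c * v 0 + d * v 1]
  map_add' u v := by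
    funext i; fin_cases i <;> simp [Matrix.cons_val_zero, Matrix.cons_val_one] <;> ring
  map_smul' t v := by
    funext i; fin_cases i <;> simp [Matrix.cons_val_zero, Matrix.cons_val_one] <;> ring

/-- The representation of the abelian Lie algebra `ℝ` on `ℝ²` sending `t` to `t • A`. -/
def rep2 (A : Module.End ℝ (Fin 2 → ℝ)) : ℝ →ₗ⁅ℝ⁆ Module.End ℝ (Fin 2 → ℝ) where
  toFun t := t • A
  map_add' s t := by simp [add_smul]
  map_smul' s t := by simp [mul_smul]
  map_lie' {s t} := by
    ext v
    simp [Ring.lie_def, Module.End.mul_apply, smul_smul, mul_comm]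

/-- The solvable Lie algebra `ℝ ⋉_A ℝ²` determined by a `2 × 2` matrix `A`. -/
abbrev Solv3 (A : Module.End ℝ (Fin 2 → ℝ)) := Sd (rep2 A)

/-- The 3-dimensional Heisenberg Lie algebra `h1`: `[e1,e2] = e3`. -/
abbrev H1 := Solv3 (endOf 0 0 1 0)

/-- The Lie algebra `r3`: `[e1,e2] = e2`, `[e1,e3] = e2 + e3`. -/
abbrev R3 := Solv3 (endOf 1 1 0 1)

/-- The Lie algebra `r_{3,λ}`: `[e1,e2] = e2`, `[e1,e3] = λ e3`. -/
abbrev R3l (lam : ℝ) := Solv3 (endOf 1 0 0 lam)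

/-- The Lie algebra `r'_{3,η}`: `[e1,e2] = ηe2 - e3`, `[e1,e3] = e2 + ηe3`. -/
abbrev R3e' (eta : ℝ) := Solv3 (endOf eta 1 (-1) eta)

namespace Solv3

variable (A : Module.End ℝ (Fin 2 → ℝ))

/-- The basis vector `e1` of `ℝ ⋉_A ℝ²`. -/
def E1 : Solv3 A := Sd.mk 1 0
/-- The basis vector `e2` of `ℝ ⋉_A ℝ²`. -/
def E2 : Solv3 A := Sd.mk 0 ![1, 0]
/-- The basis vector `e3` of `ℝ ⋉_A ℝ²`. -/
def E3 : Solv3 A := Sd.mk 0 ![0, 1]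

/-- The dual basis vector `e1* ∈ (ℝ ⋉_A ℝ²)*`. -/
def D1 : Module.Dual ℝ (Solv3 A) := LinearMap.fst ℝ ℝ (Fin 2 → ℝ)
/-- The dual basis vector `e2* ∈ (ℝ ⋉_A ℝ²)*`. -/
def D2 : Module.Dual ℝ (Solv3 A) :=
  (LinearMap.proj 0).comp (LinearMap.snd ℝ ℝ (Fin 2 → ℝ))
/-- The dual basis vector `e3* ∈ (ℝ ⋉_A ℝ²)*`. -/
def D3 : Module.Dual ℝ (Solv3 A) :=
  (LinearMap.proj 1).comp (LinearMap.snd ℝ ℝ (Fin 2 → ℝ))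

end Solv3

end Solv3

section Simple3



/-- Structure-constant bracket of a concrete copy of `sl(2,ℝ)`. -/
def sl2Br (x y : Fin 3 → ℝ) : Fin 3 → ℝ :=
  ![2 * (x 2 * y 0 - y 2 * x 0), -2 * (x 2 * y 1 - y 2 * x 1), x 0 * y 1 - y 0 * x 1]

/-- Structure-constant bracket of a concrete copy of `so(3)`. -/
def so3Br (x y : Fin 3 → ℝ) : Fin 3 → ℝ :=
  ![-(x 2 * y 1 - y 2 * x 1), x 2 * y 0 - y 2 * x 0, x 0 * y 1 - y 0 * x 1]

/-- Structure-constant bracket of the complex Heisenberg algebra. -/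
def ch1Br (x y : Fin 3 → ℂ) : Fin 3 → ℂ := ![0, 0, x 0 * y 1 - y 0 * x 1]

section BrLemmas

lemma sl2Br_add_left (x y z : Fin 3 → ℝ) :
    sl2Br (x + y) z = sl2Br x z + sl2Br y z := by
  funext i; fin_cases i <;> simp [sl2Br] <;> ring
lemma sl2Br_add_right (x y z : Fin 3 → ℝ) :
    sl2Br x (y + z) = sl2Br x y + sl2Br x z := by
  funext i; fin_cases i <;> simp [sl2Br] <;> ring
lemma sl2Br_self (x : Fin 3 → ℝ) : sl2Br x x = 0 := by
  funext i; fin_cases i <;> simp [sl2Br] <;> ring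
lemma sl2Br_leibniz (x y z : Fin 3 → ℝ) :
    sl2Br x (sl2Br y z) = sl2Br (sl2Br x y) z + sl2Br y (sl2Br x z) := by
  funext i; fin_cases i <;> simp [sl2Br] <;> ring
lemma sl2Br_smul (t : ℝ) (x y : Fin 3 → ℝ) : sl2Br x (t • y) = t • sl2Br x y := by
  funext i; fin_cases i <;> simp [sl2Br] <;> ring

lemma so3Br_add_left (x y z : Fin 3 → ℝ) :
    so3Br (x + y) z = so3Br x z + so3Br y z := by
  funext i; fin_cases i <;> simp [so3Br] <;> ring
lemma so3Br_add_right (x y z : Fin 3 → ℝ) :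
    so3Br x (y + z) = so3Br x y + so3Br x z := by
  funext i; fin_cases i <;> simp [so3Br] <;> ring
lemma so3Br_self (x : Fin 3 → ℝ) : so3Br x x = 0 := by
  funext i; fin_cases i <;> simp [so3Br] <;> ring
lemma so3Br_leibniz (x y z : Fin 3 → ℝ) :
    so3Br x (so3Br y z) = so3Br (so3Br x y) z + so3Br y (so3Br x z) := by
  funext i; fin_cases i <;> simp [so3Br] <;> ring
lemma so3Br_smul (t : ℝ) (x y : Fin 3 → ℝ) : so3Br x (t • y) = t • so3Br x y := by
  funext i; fin_cases i <;> simp [so3Br] <;> ring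

lemma ch1Br_add_left (x y z : Fin 3 → ℂ) :
    ch1Br (x + y) z = ch1Br x z + ch1Br y z := by
  funext i; fin_cases i <;> simp [ch1Br] <;> ring
lemma ch1Br_add_right (x y z : Fin 3 → ℂ) :
    ch1Br x (y + z) = ch1Br x y + ch1Br x z := by
  funext i; fin_cases i <;> simp [ch1Br] <;> ring
lemma ch1Br_self (x : Fin 3 → ℂ) : ch1Br x x = 0 := by
  funext i; fin_cases i <;> simp [ch1Br] <;> ring
lemma ch1Br_leibniz (x y z : Fin 3 → ℂ) :
    ch1Br x (ch1Br y z) = ch1Br (ch1Br x y) z + ch1Br y (ch1Br x z) := by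
  funext i; fin_cases i <;> simp [ch1Br] <;> ring
lemma ch1Br_smul (t : ℝ) (x y : Fin 3 → ℂ) : ch1Br x (t • y) = t • ch1Br x y := by
  funext i; fin_cases i <;> simp [ch1Br] <;> ring

end BrLemmas

/-- A concrete copy of `sl(2,ℝ)`. -/
def SL2 : Type := Fin 3 → ℝ

namespace SL2
instance : AddCommGroup SL2 := inferInstanceAs (AddCommGroup (Fin 3 → ℝ))
instance : Module ℝ SL2 := inferInstanceAs (Module ℝ (Fin 3 → ℝ))
instance : LieRing SL2 where
  bracket := sl2Br
  add_lie := sl2Br_add_left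
  lie_add := sl2Br_add_right
  lie_self := sl2Br_self
  leibniz_lie := sl2Br_leibniz
instance : LieAlgebra ℝ SL2 where
  lie_smul := sl2Br_smul
def E1 : SL2 := ![1, 0, 0]
def E2 : SL2 := ![0, 1, 0]
def E3 : SL2 := ![0, 0, 1]
end SL2

/-- A concrete copy of `so(3)`. -/
def SO3 : Type := Fin 3 → ℝ

namespace SO3
instance : AddCommGroup SO3 := inferInstanceAs (AddCommGroup (Fin 3 → ℝ))
instance : Module ℝ SO3 := inferInstanceAs (Module ℝ (Fin 3 → ℝ))
instance : LieRing SO3 where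
  bracket := so3Br
  add_lie := so3Br_add_left
  lie_add := so3Br_add_right
  lie_self := so3Br_self
  leibniz_lie := so3Br_leibniz
instance : LieAlgebra ℝ SO3 where
  lie_smul := so3Br_smul
def E1 : SO3 := ![1, 0, 0]
def E2 : SO3 := ![0, 1, 0]
def E3 : SO3 := ![0, 0, 1]
end SO3

/-- The real Lie algebra underlying the complexification `h1 ⊗ ℂ` of the 3-dimensional
Heisenberg Lie algebra. -/
def CH1 : Type := Fin 3 → ℂ

namespace CH1
instance : AddCommGroup CH1 := inferInstanceAs (AddCommGroup (Fin 3 → ℂ))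
instance : Module ℝ CH1 := inferInstanceAs (Module ℝ (Fin 3 → ℂ))
instance : LieRing CH1 where
  bracket := ch1Br
  add_lie := ch1Br_add_left
  lie_add := ch1Br_add_right
  lie_self := ch1Br_self
  leibniz_lie := ch1Br_leibniz
instance : LieAlgebra ℝ CH1 where
  lie_smul := ch1Br_smul
end CH1

end Simple3

end

/-!
If `J² = -1` on a real vector space then `(det J)² = (-1)^dim`, so `J` preserves no
odd-dimensional subspace. The centre of `T*h₁` is `span {e₃, e₄, e₅}`: it is three-dimensional and
coincides with the derived algebra. An abelian `J` preserves the centre, and so would any `J` with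
`a₂(J) = T*h₁`, since then `J` maps every bracket into the centre; neither can happen. On the other
hand `T*h₁` is two-step nilpotent, so for central `z` the Nijenhuis condition reduces to
`J⁅J z, y⁆ = ⁅J z, J y⁆`, which puts the centre, hence every bracket, into `a₂(J)`; thus
`a₃(J) = T*h₁`. A complex structure is `J e₁ = e₂`, `J e₃ = -e₆`, `J e₄ = e₅`.
-/

open LieAlgebra Module

section LinearAlgebra

variable {𝕜 V : Type*} [Field 𝕜] [LinearOrder 𝕜] [IsStrictOrderedRing 𝕜] [AddCommGroup V]
  [Module 𝕜 V] {J : V →ₗ[𝕜] V}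

theorem even_finrank_of_apply_apply_eq_neg (hJ : ∀ x, J (J x) = -x) : Even (finrank 𝕜 V) := by
  have hJJ : J ∘ₗ J = (-1 : 𝕜) • LinearMap.id := LinearMap.ext fun x => by simp [hJ]
  have hdet : LinearMap.det J ^ 2 = (-1) ^ finrank 𝕜 V := by
    rw [sq, ← LinearMap.det_comp, hJJ, LinearMap.det_smul, LinearMap.det_id, mul_one]
  refine (Nat.even_or_odd _).resolve_right fun hodd => ?_
  rw [hodd.neg_one_pow] at hdet
  nlinarith [sq_nonneg (LinearMap.det J)]

theorem Submodule.even_finrank_of_mapsTo (hJ : ∀ x, J (J x) = -x) (W : Submodule 𝕜 V)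
    (hW : Set.MapsTo J W W) : Even (finrank 𝕜 W) :=
  even_finrank_of_apply_apply_eq_neg (J := J.restrict hW) fun x => Subtype.ext (hJ x)

end LinearAlgebra

theorem LieAlgebra.mem_center_iff_forall_lie_eq_zero {R L : Type*} [CommRing R] [LieRing L]
    [LieAlgebra R L] {x : L} : x ∈ center R L ↔ ∀ y : L, ⁅x, y⁆ = 0 := by
  rw [LieModule.mem_maxTrivSubmodule]
  exact forall_congr' fun y => by rw [← lie_skew, neg_eq_zero]

section AscendingSeries

variable {g : Type*} [LieRing g] [LieAlgebra ℝ g] {J : g →ₗ[ℝ] g}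

theorem mem_aSer_succ {l : ℕ} {x : g} :
    x ∈ aSer J (l + 1) ↔ (∀ y, ⁅x, y⁆ ∈ aSer J l) ∧ ∀ y, ⁅J x, y⁆ ∈ aSer J l :=
  Iff.rfl

theorem aSer_monotone : Monotone (aSer J) := by
  refine monotone_nat_of_le_succ fun l => ?_
  induction l with
  | zero => rintro x rfl; simp [aSer]
  | succ l ih => exact fun x hx => mem_aSer_succ.2 ⟨fun y => ih (hx.1 y), fun y => ih (hx.2 y)⟩

theorem isNilpotentStepCpx_succ_iff {r : ℕ} :
    IsNilpotentStepCpx J (r + 1) ↔ aSer J (r + 1) = Set.univ ∧ aSer J r ≠ Set.univ := by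
  refine ⟨fun h => ⟨h.1, h.2 r r.lt_succ_self⟩, fun h => ⟨h.1, fun s hs hs_univ => h.2 ?_⟩⟩
  exact Set.univ_subset_iff.1 (hs_univ ▸ aSer_monotone (Nat.le_of_lt_succ hs))

theorem mem_aSer_one_iff {x : g} : x ∈ aSer J 1 ↔ x ∈ center ℝ g ∧ J x ∈ center ℝ g := by
  simp only [aSer, Set.mem_singleton_iff, Set.mem_ofPred_eq, mem_center_iff_forall_lie_eq_zero]

theorem mapsTo_center_of_isAbelianCpx (hJ : ∀ x, J (J x) = -x) (hab : IsAbelianCpx J) :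
    Set.MapsTo J (center ℝ g) (center ℝ g) := by
  intro z hz
  rw [SetLike.mem_coe, mem_center_iff_forall_lie_eq_zero] at hz ⊢
  intro y
  calc ⁅J z, y⁆ = ⁅J z, J (-J y)⁆ := by rw [map_neg, hJ, neg_neg]
    _ = 0 := by rw [hab, hz]

theorem mapsTo_center_of_aSer_two_eq_univ (h : aSer J 2 = Set.univ) :
    Set.MapsTo J (⁅(⊤ : LieIdeal ℝ g), (⊤ : LieIdeal ℝ g)⁆ : LieIdeal ℝ g) (center ℝ g) := by
  have hle : (⁅(⊤ : LieIdeal ℝ g), (⊤ : LieIdeal ℝ g)⁆ : LieIdeal ℝ g).toSubmodule ≤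
      (center ℝ g).toSubmodule.comap J := by
    rw [LieSubmodule.lieIdeal_oper_eq_linear_span', Submodule.span_le]
    rintro _ ⟨x, -, y, -, rfl⟩
    have hx : x ∈ aSer J 2 := h ▸ Set.mem_univ x
    exact (mem_aSer_one_iff.1 ((mem_aSer_succ.1 hx).1 y)).2
  exact fun z hz => hle hz

theorem center_subset_aSer_two (hJ : IsCpxStruct J) (h2 : ∀ x y : g, ⁅x, y⁆ ∈ center ℝ g)
    {z : g} (hz : z ∈ center ℝ g) : z ∈ aSer J 2 := by
  have hz' := mem_center_iff_forall_lie_eq_zero.1 hz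
  refine mem_aSer_succ.2 ⟨fun y => ?_, fun y => mem_aSer_one_iff.2 ⟨h2 _ _, ?_⟩⟩
  · rw [hz' y]
    exact aSer_monotone zero_le_one rfl
  · have hN := hJ.2 z y
    rw [hz' y, hz' (J y), map_zero, sub_zero, sub_zero, sub_eq_zero] at hN
    exact hN ▸ h2 _ _

theorem aSer_three_eq_univ (hJ : IsCpxStruct J) (h2 : ∀ x y : g, ⁅x, y⁆ ∈ center ℝ g) :
    aSer J 3 = Set.univ :=
  Set.eq_univ_of_forall fun x => mem_aSer_succ.2
    ⟨fun y => center_subset_aSer_two hJ h2 (h2 x y), fun y => center_subset_aSer_two hJ h2 (h2 _ y)⟩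

end AscendingSeries

namespace Solv3

variable {A : Module.End ℝ (Fin 2 → ℝ)}

@[simp] theorem D1_mk (t : ℝ) (v : Fin 2 → ℝ) : D1 A (Sd.mk t v) = t := rfl
@[simp] theorem D2_mk (t : ℝ) (v : Fin 2 → ℝ) : D2 A (Sd.mk t v) = v 0 := rfl
@[simp] theorem D3_mk (t : ℝ) (v : Fin 2 → ℝ) : D3 A (Sd.mk t v) = v 1 := rfl

theorem eq_sum (a : Solv3 A) : a = D1 A a • E1 A + D2 A a • E2 A + D3 A a • E3 A := by
  obtain ⟨t, v, rfl⟩ := Sd.mk_surj a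
  simp only [E1, E2, E3, D1_mk, D2_mk, D3_mk, Sd.smul_mk, Sd.mk_add_mk, Sd.mk_inj]
  constructor
  · simp
  · funext i; fin_cases i <;> simp

theorem dual_ext {φ ψ : Dual ℝ (Solv3 A)} (h₁ : φ (E1 A) = ψ (E1 A)) (h₂ : φ (E2 A) = ψ (E2 A))
    (h₃ : φ (E3 A) = ψ (E3 A)) : φ = ψ :=
  LinearMap.ext fun a => by rw [eq_sum a]; simp [h₁, h₂, h₃]

variable (A) in
def cotangentCoords : CotangentAlg (Solv3 A) ≃ₗ[ℝ] (Fin 6 → ℝ) where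
  toFun p := ![D1 A (Sd.pr1 p), D2 A (Sd.pr1 p), D3 A (Sd.pr1 p),
    Sd.pr2 p (E1 A), Sd.pr2 p (E2 A), Sd.pr2 p (E3 A)]
  invFun v := Sd.mk (v 0 • E1 A + v 1 • E2 A + v 2 • E3 A) (v 3 • D1 A + v 4 • D2 A + v 5 • D3 A)
  map_add' p q := by
    obtain ⟨a, φ, rfl⟩ := Sd.mk_surj p
    obtain ⟨b, ψ, rfl⟩ := Sd.mk_surj q
    funext i; fin_cases i <;> simp
  map_smul' t p := by
    obtain ⟨a, φ, rfl⟩ := Sd.mk_surj p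
    funext i; fin_cases i <;> simp
  left_inv p := by
    obtain ⟨a, φ, rfl⟩ := Sd.mk_surj p
    simp only [Sd.pr1_mk, Sd.pr2_mk, Sd.mk_inj]
    refine ⟨by simpa using (eq_sum a).symm, dual_ext ?_ ?_ ?_⟩ <;> simp [E1, E2, E3]
  right_inv v := by
    funext i; fin_cases i <;> simp [E1, E2, E3]

end Solv3

namespace CotangentH1

local notation "𝔤" => CotangentAlg H1

-- Indices are 0-based: `coords · i` and `e i` refer to the paper's `e_(i+1)`.
abbrev coords : 𝔤 ≃ₗ[ℝ] (Fin 6 → ℝ) := Solv3.cotangentCoords (endOf 0 0 1 0)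

theorem h1_lie (a b : H1) :
    ⁅a, b⁆ = (Solv3.D1 _ a * Solv3.D2 _ b - Solv3.D1 _ b * Solv3.D2 _ a) • Solv3.E3 _ := by
  obtain ⟨s, v, rfl⟩ := Sd.mk_surj a
  obtain ⟨t, w, rfl⟩ := Sd.mk_surj b
  simp only [Sd.lie_mk, Solv3.E3, Sd.smul_mk, Sd.mk_inj, Solv3.D1_mk, Solv3.D2_mk]
  constructor
  · simp [Ring.lie_def, mul_comm]
  · funext i; fin_cases i <;> simp [rep2, endOf]

theorem coords_lie (p q : 𝔤) :
    coords ⁅p, q⁆ = ![0, 0, coords p 0 * coords q 1 - coords p 1 * coords q 0,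
      coords p 1 * coords q 5 - coords q 1 * coords p 5,
      coords p 5 * coords q 0 - coords p 0 * coords q 5, 0] := by
  obtain ⟨a, φ, rfl⟩ := Sd.mk_surj p
  obtain ⟨b, ψ, rfl⟩ := Sd.mk_surj q
  funext i; fin_cases i <;>
    simp [Solv3.cotangentCoords, h1_lie, Solv3.E1, Solv3.E2, Solv3.E3, -Sd.smul_mk] <;> ring

noncomputable def e : Basis (Fin 6) ℝ 𝔤 := Basis.ofEquivFun coords

@[simp] theorem coords_e (i : Fin 6) : coords (e i) = Pi.single i 1 := by
  simp [e, Basis.coe_ofEquivFun]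

theorem e_repr (p : 𝔤) (i : Fin 6) : e.repr p i = coords p i := Basis.ofEquivFun_repr_apply _ _ _

theorem lie_e0_e1 : ⁅e 0, e 1⁆ = e 2 :=
  coords.injective (by ext j; fin_cases j <;> simp [coords_lie])
theorem lie_e1_e5 : ⁅e 1, e 5⁆ = e 3 :=
  coords.injective (by ext j; fin_cases j <;> simp [coords_lie])
theorem lie_e5_e0 : ⁅e 5, e 0⁆ = e 4 :=
  coords.injective (by ext j; fin_cases j <;> simp [coords_lie])

theorem mem_center_iff {p : 𝔤} :
    p ∈ center ℝ 𝔤 ↔ coords p 0 = 0 ∧ coords p 1 = 0 ∧ coords p 5 = 0 := by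
  rw [mem_center_iff_forall_lie_eq_zero]
  constructor
  · intro h
    have h₀ := congrFun (congrArg coords (h (e 1))) 2
    have h₁ := congrFun (congrArg coords (h (e 0))) 2
    have h₅ := congrFun (congrArg coords (h (e 1))) 3
    simp [coords_lie] at h₀ h₁ h₅
    exact ⟨h₀, h₁, h₅⟩
  · rintro ⟨h₀, h₁, h₅⟩ q
    apply coords.injective
    funext i; fin_cases i <;> simp [coords_lie, h₀, h₁, h₅]

theorem lie_mem_center (p q : 𝔤) : ⁅p, q⁆ ∈ center ℝ 𝔤 :=
  mem_center_iff.2 (by simp [coords_lie])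

theorem center_eq_span :
    (center ℝ 𝔤).toSubmodule = Submodule.span ℝ (Set.range ![e 2, e 3, e 4]) := by
  apply le_antisymm
  · intro z hz
    obtain ⟨h₀, h₁, h₅⟩ := mem_center_iff.1 hz
    have hz_eq : z = coords z 2 • e 2 + coords z 3 • e 3 + coords z 4 • e 4 := by
      conv_lhs => rw [← e.sum_repr z]
      simp [Fin.sum_univ_six, e_repr, h₀, h₁, h₅]
    rw [hz_eq]
    refine add_mem (add_mem ?_ ?_) ?_ <;> refine Submodule.smul_mem _ _ (Submodule.subset_span ?_)
    exacts [⟨0, rfl⟩, ⟨1, rfl⟩, ⟨2, rfl⟩]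
  · rw [Submodule.span_le]
    rintro _ ⟨i, rfl⟩
    fin_cases i <;> exact mem_center_iff.2 (by simp)

theorem finrank_center : finrank ℝ (center ℝ 𝔤).toSubmodule = 3 := by
  have hli : LinearIndependent ℝ ![e 2, e 3, e 4] := by
    convert e.linearIndependent.comp ![2, 3, 4] (by decide) using 1
    funext i; fin_cases i <;> rfl
  rw [center_eq_span, finrank_span_eq_card hli, Fintype.card_fin]

theorem center_le_top_lie_top : center ℝ 𝔤 ≤ ⁅(⊤ : LieIdeal ℝ 𝔤), (⊤ : LieIdeal ℝ 𝔤)⁆ := by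
  have hbr : ∀ p q : 𝔤, ⁅p, q⁆ ∈ ⁅(⊤ : LieIdeal ℝ 𝔤), (⊤ : LieIdeal ℝ 𝔤)⁆ := fun p q =>
    LieSubmodule.lie_mem_lie (LieSubmodule.mem_top p) (LieSubmodule.mem_top q)
  intro z hz
  have hz' : z ∈ (center ℝ 𝔤).toSubmodule := hz
  rw [center_eq_span] at hz'
  refine (Submodule.span_le (p := (⁅(⊤ : LieIdeal ℝ 𝔤), (⊤ : LieIdeal ℝ 𝔤)⁆ :
    LieIdeal ℝ 𝔤).toSubmodule)).2 ?_ hz'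
  rintro _ ⟨i, rfl⟩
  fin_cases i
  exacts [lie_e0_e1 ▸ hbr _ _, lie_e1_e5 ▸ hbr _ _, lie_e5_e0 ▸ hbr _ _]

theorem not_mapsTo_center {J : 𝔤 →ₗ[ℝ] 𝔤} (hJ : ∀ x, J (J x) = -x) :
    ¬ Set.MapsTo J (center ℝ 𝔤) (center ℝ 𝔤) := fun h => by
  have heven := Submodule.even_finrank_of_mapsTo hJ _ h
  rw [finrank_center] at heven
  exact absurd heven (by decide)

noncomputable def Jstd : 𝔤 →ₗ[ℝ] 𝔤 := e.constr ℝ ![e 1, -e 0, -e 5, e 4, -e 3, e 2]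

theorem coords_Jstd (p : 𝔤) : coords (Jstd p) =
    ![-coords p 1, coords p 0, coords p 5, -coords p 4, coords p 3, -coords p 2] := by
  ext i; fin_cases i <;> simp [Jstd, Fin.sum_univ_six, e_repr]

theorem isCpxStruct_Jstd : IsCpxStruct Jstd :=
  ⟨fun p => coords.injective (by ext i; fin_cases i <;> simp [coords_Jstd]),
   fun p q => coords.injective (by ext i; fin_cases i <;> simp [coords_lie, coords_Jstd] <;> ring)⟩

end CotangentH1

open CotangentH1 in
/-- `T*h1` admits complex structures, none of them abelian, and every
complex structure on `T*h1` is nilpotent, in fact 3-step nilpotent. -/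
theorem cotangent_h1_cpx_structures :
    (∃ J : CotangentAlg H1 →ₗ[ℝ] CotangentAlg H1, IsCpxStruct J) ∧
    (¬∃ J : CotangentAlg H1 →ₗ[ℝ] CotangentAlg H1, IsCpxStruct J ∧ IsAbelianCpx J) ∧
    ∀ J : CotangentAlg H1 →ₗ[ℝ] CotangentAlg H1, IsCpxStruct J →
      IsNilpotentCpx J ∧ IsNilpotentStepCpx J 3 := by
  refine ⟨⟨Jstd, isCpxStruct_Jstd⟩, ?_, fun J hJ => ?_⟩
  · rintro ⟨J, hJ, hab⟩
    exact not_mapsTo_center hJ.1 (mapsTo_center_of_isAbelianCpx hJ.1 hab)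
  · have h3 := aSer_three_eq_univ hJ lie_mem_center
    refine ⟨⟨3, h3⟩, isNilpotentStepCpx_succ_iff.2 ⟨h3, fun h2 => ?_⟩⟩
    exact not_mapsTo_center hJ.1
      ((mapsTo_center_of_aSer_two_eq_univ h2).mono_left center_le_top_lie_top)
end

section
/- Let h be a real Lie algebra and π a representation of h on V with dim V = dim h. If J is a totally real complex structure on T_π h = h ⋉_π V, then the 2-form ω_J on the dual semidirect product T_{π*} h = h ⋉_{π*} V* defined by ω_J(x + u, y + v) = v(Jx) − u(Jy) (for x,y ∈ h and u,v ∈ V*) is a lagrangian symplectic structure; moreover J ↦ ω_J gives a one-to-one correspondence between totally real complex structures on T_π h and lagrangian symplectic structures on T_{π*} h. -/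
open LieAlgebra

attribute [local instance 100] LieRing.ofAssociativeRing

/-- The 2-form `ω_J` on `h ⋉_{π*} V*` induced by a totally real complex structure `J` on
`h ⋉_π V`: `ω_J(x + u, y + v) = v(Jx) - u(Jy)`. -/
noncomputable def omegaJ {h V : Type*} [LieRing h] [LieAlgebra ℝ h]
    [AddCommGroup V] [Module ℝ V] (π : h →ₗ⁅ℝ⁆ Module.End ℝ V)
    (J : Sd π →ₗ[ℝ] Sd π) (p q : Sd (dualRep π)) : ℝ :=
  Sd.pr2 q (Sd.pr2 (J (Sd.mk (Sd.pr1 p) 0))) - Sd.pr2 p (Sd.pr2 (J (Sd.mk (Sd.pr1 q) 0)))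

/-! Both kinds of structures are parametrised by the same data: linear isomorphisms
`e : h ≃ V` that are 1-cocycles, `e ⁅x, y⁆ = π x (e y) - π y (e x)`. A totally real `J` with
`J² = -1` is `(x, u) ↦ (-e⁻¹ u, e x)` for `e` the restriction of `J` to `h`, and its Nijenhuis
tensor vanishes exactly when `e` is a cocycle. A 2-form on `h ⋉ V*` for which `h` and `V*` are
isotropic is `(x + u, y + v) ↦ v (e x) - u (e y)` for the map `e : h → V** = V` it induces; it is
nondegenerate exactly when `e` is bijective and closed exactly when `e` is a cocycle. Under these
parametrisations `J ↦ ω_J` is the identity on `e`. -/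

namespace Sd

variable {h V : Type*} [LieRing h] [LieAlgebra ℝ h] [AddCommGroup V] [Module ℝ V]
  {π : h →ₗ⁅ℝ⁆ Module.End ℝ V}

@[simp] lemma mk_zero_zero : mk (π := π) 0 0 = 0 := rfl

@[simp] lemma mk_eq_zero {x : h} {u : V} : mk (π := π) x u = 0 ↔ x = 0 ∧ u = 0 := mk_inj

@[simp] lemma mk_sub_mk (x y : h) (u v : V) : mk (π := π) x u - mk y v = mk (x - y) (u - v) :=
  rfl

@[simp] lemma pr1_add (p q : Sd π) : pr1 (p + q) = pr1 p + pr1 q := rfl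

@[simp] lemma pr2_add (p q : Sd π) : pr2 (p + q) = pr2 p + pr2 q := rfl

@[simp] lemma pr1_smul (t : ℝ) (p : Sd π) : pr1 (t • p) = t • pr1 p := rfl

@[simp] lemma pr2_smul (t : ℝ) (p : Sd π) : pr2 (t • p) = t • pr2 p := rfl

lemma mk_eq_add (x : h) (u : V) : mk (π := π) x u = mk x 0 + mk 0 u := by simp

lemma mk_mem_hPart_iff (x : h) (u : V) : mk (π := π) x u ∈ hPart π ↔ u = 0 := Iff.rfl

lemma mk_mem_vPart_iff (x : h) (u : V) : mk (π := π) x u ∈ vPart π ↔ x = 0 := Iff.rfl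

end Sd

namespace IsSymplForm

variable {g : Type*} [LieRing g] [LieAlgebra ℝ g] {ω : g → g → ℝ}

def toBilinForm (hω : IsSymplForm ω) : LinearMap.BilinForm ℝ g :=
  LinearMap.mk₂ ℝ ω (fun p p' q => (hω.2.1 q).map_add p p') (fun t p q => (hω.2.1 q).map_smul t p)
    (fun p q q' => (hω.1 p).map_add q q') (fun t p q => (hω.1 p).map_smul t q)

@[simp] lemma toBilinForm_apply (hω : IsSymplForm ω) (p q : g) : hω.toBilinForm p q = ω p q :=
  rfl

lemma isAlt_toBilinForm (hω : IsSymplForm ω) : hω.toBilinForm.IsAlt := hω.2.2.1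

end IsSymplForm

section Correspondence

variable {h V : Type*} [LieRing h] [LieAlgebra ℝ h] [AddCommGroup V] [Module ℝ V]
  {π : h →ₗ⁅ℝ⁆ Module.End ℝ V}

variable (π) in
def IsOneCocycle (ψ : h → V) : Prop := ∀ x y : h, ψ ⁅x, y⁆ = π x (ψ y) - π y (ψ x)

variable (π) in
def cpxOfEquiv (e : h ≃ₗ[ℝ] V) : Sd π →ₗ[ℝ] Sd π :=
  ((-e.symm.toLinearMap) ∘ₗ LinearMap.snd ℝ h V).prod (e.toLinearMap ∘ₗ LinearMap.fst ℝ h V)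

@[simp] lemma cpxOfEquiv_mk (e : h ≃ₗ[ℝ] V) (x : h) (u : V) :
    cpxOfEquiv π e (Sd.mk x u) = Sd.mk (-e.symm u) (e x) :=
  rfl

lemma isTotallyReal_cpxOfEquiv (e : h ≃ₗ[ℝ] V) : IsTotallyReal π (cpxOfEquiv π e) := by
  ext p
  obtain ⟨x, u, rfl⟩ := Sd.mk_surj p
  simp only [Submodule.mem_map, Sd.mk_mem_vPart_iff]
  constructor
  · rintro ⟨q, hq, hqp⟩
    obtain ⟨y, v, rfl⟩ := Sd.mk_surj q
    rw [Sd.mk_mem_hPart_iff] at hq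
    simp_all
  · rintro rfl
    exact ⟨Sd.mk (e.symm u) 0, rfl, by simp⟩

lemma exists_eq_cpxOfEquiv {J : Sd π →ₗ[ℝ] Sd π} (hJ2 : ∀ p, J (J p) = -p)
    (hJ : IsTotallyReal π J) : ∃ e : h ≃ₗ[ℝ] V, J = cpxOfEquiv π e := by
  have hJh (x : h) : J (Sd.mk x 0) ∈ Sd.vPart π := hJ ▸ Submodule.mem_map_of_mem rfl
  set ψ : h →ₗ[ℝ] V := LinearMap.snd ℝ h V ∘ₗ J ∘ₗ LinearMap.inl ℝ h V
  have hJψ (x : h) : J (Sd.mk x 0) = Sd.mk 0 (ψ x) := Sd.ext_iff.2 ⟨hJh x, rfl⟩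
  have hψ : Function.Bijective ψ := by
    refine ⟨(injective_iff_map_eq_zero ψ).2 fun x hx => ?_, fun v => ?_⟩
    · simpa [hJ2, hx] using congrArg J (hJψ x)
    · obtain ⟨p, hp, hpv⟩ := (hJ ▸ (Sd.mk_mem_vPart_iff 0 v).2 rfl :
        Sd.mk 0 v ∈ (Sd.hPart π).map J)
      obtain ⟨x, u, rfl⟩ := Sd.mk_surj p
      obtain rfl : u = 0 := hp
      exact ⟨x, by simpa [hJψ] using hpv⟩
  refine ⟨LinearEquiv.ofBijective ψ hψ, LinearMap.ext fun p => ?_⟩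
  obtain ⟨x, u, rfl⟩ := Sd.mk_surj p
  obtain ⟨a, rfl⟩ := hψ.2 u
  have hJV : J (Sd.mk 0 (ψ a)) = Sd.mk (-a) 0 := by rw [← hJψ, hJ2, Sd.neg_mk, neg_zero]
  rw [cpxOfEquiv_mk, Sd.mk_eq_add x, map_add, hJψ, hJV]
  simp

lemma isCpxStruct_cpxOfEquiv_iff (e : h ≃ₗ[ℝ] V) :
    IsCpxStruct (cpxOfEquiv π e) ↔ IsOneCocycle π e := by
  have hmk (p : Sd π) : ∃ x a, p = Sd.mk x (e a) :=
    ⟨Sd.pr1 p, e.symm (Sd.pr2 p), by simp [Sd.ext_iff]⟩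
  refine ⟨fun hJ x y => ?_, fun he => ⟨fun p => ?_, fun p q => ?_⟩⟩
  · have hN := hJ.2 (Sd.mk x 0) (Sd.mk y 0)
    simp only [cpxOfEquiv_mk, map_zero, neg_zero, Sd.lie_mk, lie_self, LinearMap.zero_apply,
      sub_self, Sd.mk_zero_zero, zero_sub, Sd.neg_mk, zero_lie, map_neg, neg_neg,
      Sd.mk_sub_mk, lie_zero, sub_zero, sub_neg_eq_add, Sd.mk_eq_zero, and_true] at hN
    apply e.symm.injective
    rw [e.symm_apply_apply, map_sub]
    linear_combination (norm := module) -hN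
  · obtain ⟨x, u, rfl⟩ := Sd.mk_surj p
    simp
  · obtain ⟨x, a, rfl⟩ := hmk p
    obtain ⟨y, b, rfl⟩ := hmk q
    simp only [cpxOfEquiv_mk, LinearEquiv.symm_apply_apply, Sd.lie_mk, lie_neg, neg_lie,
      map_neg, LinearMap.neg_apply, Sd.mk_sub_mk, Sd.mk_eq_zero]
    constructor
    · apply e.injective
      simp only [map_sub, map_neg, LinearEquiv.apply_symm_apply, map_zero, he a b, he x y]
      abel
    · rw [he a y, he x b]
      abel

variable (π) in
def symplOf (ψ : h →ₗ[ℝ] V) (p q : Sd (dualRep π)) : ℝ :=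
  Sd.pr2 q (ψ (Sd.pr1 p)) - Sd.pr2 p (ψ (Sd.pr1 q))

@[simp] lemma symplOf_mk (ψ : h →ₗ[ℝ] V) (x y : h) (u v : Module.Dual ℝ V) :
    symplOf π ψ (Sd.mk x u) (Sd.mk y v) = v (ψ x) - u (ψ y) := rfl

lemma symplOf_injective : Function.Injective (symplOf π : (h →ₗ[ℝ] V) → _) := by
  intro ψ ψ' hψ
  ext x
  rw [← sub_eq_zero, ← Module.forall_dual_apply_eq_zero_iff ℝ]
  intro φ
  simpa [sub_eq_zero] using congrFun₂ hψ (Sd.mk x 0) (Sd.mk 0 φ)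

lemma symplOf_nondegenerate_iff (ψ : h →ₗ[ℝ] V) :
    (∀ p, (∀ q, symplOf π ψ p q = 0) → p = 0) ↔ Function.Bijective ψ := by
  rw [Function.Bijective, ← LinearMap.dualMap_injective_iff, injective_iff_map_eq_zero,
    injective_iff_map_eq_zero]
  constructor
  · intro hω
    refine ⟨fun x hx => ?_, fun u hu => ?_⟩
    · refine (Sd.mk_eq_zero.1 (hω (Sd.mk x 0) fun q => ?_)).1
      obtain ⟨y, v, rfl⟩ := Sd.mk_surj q
      simp [hx]
    · refine (Sd.mk_eq_zero.1 (hω (Sd.mk 0 u) fun q => ?_)).2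
      obtain ⟨y, v, rfl⟩ := Sd.mk_surj q
      simpa using LinearMap.congr_fun hu y
  · rintro ⟨hinj, hsurj⟩ p hp
    obtain ⟨x, u, rfl⟩ := Sd.mk_surj p
    have hx : x = 0 := hinj x <| (Module.forall_dual_apply_eq_zero_iff ℝ _).1 fun φ => by
      simpa using hp (Sd.mk 0 φ)
    have hu : u = 0 := hsurj u <| LinearMap.ext fun y => by simpa using hp (Sd.mk y 0)
    simp [hx, hu]

lemma symplOf_closed_iff (ψ : h →ₗ[ℝ] V) :
    (∀ p q r, symplOf π ψ ⁅p, q⁆ r + symplOf π ψ ⁅q, r⁆ p + symplOf π ψ ⁅r, p⁆ q = 0) ↔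
      IsOneCocycle π ψ := by
  constructor
  · intro hω x y
    rw [← sub_eq_zero, ← Module.forall_dual_apply_eq_zero_iff ℝ]
    intro w
    have := hω (Sd.mk x 0) (Sd.mk y 0) (Sd.mk 0 w)
    simp only [Sd.lie_mk, map_zero, sub_self, symplOf_mk, sub_zero, lie_zero,
      dualRep_apply, sub_neg_eq_add, zero_add, zero_lie, zero_sub, LinearMap.neg_apply,
      neg_neg] at this
    rw [map_sub, map_sub]
    linarith
  · intro hψ p q r
    obtain ⟨x, u, rfl⟩ := Sd.mk_surj p
    obtain ⟨y, v, rfl⟩ := Sd.mk_surj q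
    obtain ⟨z, w, rfl⟩ := Sd.mk_surj r
    simp [hψ x y, hψ y z, hψ z x]
    ring

lemma isLagrangianSympl_symplOf_iff (ψ : h →ₗ[ℝ] V) :
    IsLagrangianSympl (dualRep π) (symplOf π ψ) ↔ Function.Bijective ψ ∧ IsOneCocycle π ψ := by
  rw [← symplOf_nondegenerate_iff, ← symplOf_closed_iff]
  refine ⟨fun hω => ⟨hω.1.2.2.2.1, hω.1.2.2.2.2⟩, fun ⟨hnd, hcl⟩ =>
    ⟨⟨fun p => ⟨fun q r => ?_, fun t q => ?_⟩, fun q => ⟨fun p r => ?_, fun t p => ?_⟩,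
      fun p => sub_self _, hnd, hcl⟩, fun x y => by simp, fun u v => by simp⟩⟩
  all_goals simp only [symplOf, Sd.pr1_add, Sd.pr2_add, Sd.pr1_smul, Sd.pr2_smul, map_add,
    map_smul, LinearMap.add_apply, LinearMap.smul_apply, smul_eq_mul]; ring

lemma exists_eq_symplOf [FiniteDimensional ℝ V] {ω : Sd (dualRep π) → Sd (dualRep π) → ℝ}
    (hω : IsLagrangianSympl (dualRep π) ω) : ∃ ψ : h →ₗ[ℝ] V, ω = symplOf π ψ := by
  obtain ⟨hS, hh, hV⟩ := hω
  set B := hS.toBilinForm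
  have hB (p q) : B p q = ω p q := rfl
  let ψ : h →ₗ[ℝ] V := (Module.evalEquiv ℝ V).symm.toLinearMap ∘ₗ
    B.compl₁₂ (LinearMap.inl ℝ h (Module.Dual ℝ V)) (LinearMap.inr ℝ h (Module.Dual ℝ V))
  have hψ (x : h) (φ : Module.Dual ℝ V) : φ (ψ x) = ω (Sd.mk x 0) (Sd.mk 0 φ) :=
    Module.apply_evalEquiv_symm_apply _ _ _ _
  refine ⟨ψ, funext₂ fun p q => ?_⟩
  obtain ⟨x, u, rfl⟩ := Sd.mk_surj p
  obtain ⟨y, v, rfl⟩ := Sd.mk_surj q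
  have hskew : ω (Sd.mk 0 u) (Sd.mk y 0) = -ω (Sd.mk y 0) (Sd.mk 0 u) :=
    (hS.isAlt_toBilinForm.neg_eq _ _).symm
  calc ω (Sd.mk x u) (Sd.mk y v) = B (Sd.mk x 0 + Sd.mk 0 u) (Sd.mk y 0 + Sd.mk 0 v) := by
        rw [← Sd.mk_eq_add, ← Sd.mk_eq_add, hB]
    _ = ω (Sd.mk x 0) (Sd.mk 0 v) + ω (Sd.mk 0 u) (Sd.mk y 0) := by
        simp only [map_add, LinearMap.add_apply, hB, hh, hV]
        ring
    _ = symplOf π ψ (Sd.mk x u) (Sd.mk y v) := by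
        rw [hskew, symplOf_mk, hψ, hψ]
        ring

lemma omegaJ_cpxOfEquiv (e : h ≃ₗ[ℝ] V) : omegaJ π (cpxOfEquiv π e) = symplOf π e := by
  ext p q
  obtain ⟨x, u, rfl⟩ := Sd.mk_surj p
  obtain ⟨y, v, rfl⟩ := Sd.mk_surj q
  simp [omegaJ]

end Correspondence

theorem totallyReal_cpx_corresponds_lagrangian_symplectic_general
    {h V : Type*} [LieRing h] [LieAlgebra ℝ h] [AddCommGroup V] [Module ℝ V]
    [FiniteDimensional ℝ V]
    (π : h →ₗ⁅ℝ⁆ Module.End ℝ V) :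
    (∀ J : Sd π →ₗ[ℝ] Sd π, IsCpxStruct J → IsTotallyReal π J →
        IsLagrangianSympl (dualRep π) (omegaJ π J)) ∧
    (∀ J J' : Sd π →ₗ[ℝ] Sd π, IsCpxStruct J → IsTotallyReal π J →
        IsCpxStruct J' → IsTotallyReal π J' → omegaJ π J = omegaJ π J' → J = J') ∧
    (∀ ω : Sd (dualRep π) → Sd (dualRep π) → ℝ, IsLagrangianSympl (dualRep π) ω →
        ∃ J : Sd π →ₗ[ℝ] Sd π, IsCpxStruct J ∧ IsTotallyReal π J ∧ omegaJ π J = ω) := by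
  refine ⟨fun J hJ hTR => ?_, fun J J' hJ hTR hJ' hTR' hω => ?_, fun ω hω => ?_⟩
  · obtain ⟨e, rfl⟩ := exists_eq_cpxOfEquiv hJ.1 hTR
    rw [omegaJ_cpxOfEquiv, isLagrangianSympl_symplOf_iff]
    exact ⟨e.bijective, (isCpxStruct_cpxOfEquiv_iff e).1 hJ⟩
  · obtain ⟨e, rfl⟩ := exists_eq_cpxOfEquiv hJ.1 hTR
    obtain ⟨e', rfl⟩ := exists_eq_cpxOfEquiv hJ'.1 hTR'
    rw [omegaJ_cpxOfEquiv, omegaJ_cpxOfEquiv] at hω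
    rw [LinearEquiv.toLinearMap_injective (symplOf_injective hω)]
  · obtain ⟨ψ, rfl⟩ := exists_eq_symplOf hω
    obtain ⟨hψ, hcoc⟩ := (isLagrangianSympl_symplOf_iff ψ).1 hω
    let e := LinearEquiv.ofBijective ψ hψ
    exact ⟨cpxOfEquiv π e, (isCpxStruct_cpxOfEquiv_iff e).2 hcoc, isTotallyReal_cpxOfEquiv e,
      omegaJ_cpxOfEquiv e⟩

/-- `J ↦ ω_J` is a one-to-one correspondence between totally real complex
structures on `T_π h = h ⋉_π V` and lagrangian symplectic structures on
`T_{π*} h = h ⋉_{π*} V*`. -/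
theorem totallyReal_cpx_corresponds_lagrangian_symplectic
    {h V : Type*} [LieRing h] [LieAlgebra ℝ h] [AddCommGroup V] [Module ℝ V]
    [FiniteDimensional ℝ h] [FiniteDimensional ℝ V]
    (hdim : Module.finrank ℝ V = Module.finrank ℝ h)
    (π : h →ₗ⁅ℝ⁆ Module.End ℝ V) :
    (∀ J : Sd π →ₗ[ℝ] Sd π, IsCpxStruct J → IsTotallyReal π J →
        IsLagrangianSympl (dualRep π) (omegaJ π J)) ∧
    (∀ J J' : Sd π →ₗ[ℝ] Sd π, IsCpxStruct J → IsTotallyReal π J →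
        IsCpxStruct J' → IsTotallyReal π J' → omegaJ π J = omegaJ π J' → J = J') ∧
    (∀ ω : Sd (dualRep π) → Sd (dualRep π) → ℝ, IsLagrangianSympl (dualRep π) ω →
        ∃ J : Sd π →ₗ[ℝ] Sd π, IsCpxStruct J ∧ IsTotallyReal π J ∧ omegaJ π J = ω) :=
  totallyReal_cpx_corresponds_lagrangian_symplectic_general π
end
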